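/- arXiv:math/0406207 — 4 statements merged into one kernel-verified Lean document; each statement's English description precedes it below -/
import Mathlib

section
/- The endomorphism φ of the free associative algebra K⟨x,y,z⟩ defined by φ(x) = x + z(xz − zy), φ(y) = y + (xz − zy)z, φ(z) = z is a K-algebra automorphism, with inverse given by ψ(x) = x − z(xz − zy), ψ(y) = y − (xz − zy)z, ψ(z) = z. -/
/-!
Write `w = xz − zy` and, for `t ∈ K`, let `φₜ` send `x ↦ x + t·zw`, `y ↦ y + t·wz`, `z ↦ z`.
The point is that `φₜ` fixes `w`: `(x + t·zw)z − z(y + t·wz) = xz − zy`. Hence `φₛ ∘ φₜ = φₛ₊ₜ`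
and `φ₀ = id`, so `t ↦ φₜ` is a one-parameter group of automorphisms (the exponential of the
locally nilpotent derivation `x ↦ zw`, `y ↦ wz`, `z ↦ 0`), and `φ = φ₁`, `ψ = φ₋₁`.
-/

open FreeAlgebra

namespace Anick

variable (K : Type*) [CommRing K]

def twistedCommutator : FreeAlgebra K (Fin 3) := ι K 0 * ι K 2 - ι K 2 * ι K 1

def flow (t : K) : FreeAlgebra K (Fin 3) →ₐ[K] FreeAlgebra K (Fin 3) :=
  lift K ![ι K 0 + t • (ι K 2 * twistedCommutator K), ι K 1 + t • (twistedCommutator K * ι K 2),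
    ι K 2]

variable {K}

@[simp]
lemma flow_ι_zero (t : K) : flow K t (ι K 0) = ι K 0 + t • (ι K 2 * twistedCommutator K) := by
  simp [flow]

@[simp]
lemma flow_ι_one (t : K) : flow K t (ι K 1) = ι K 1 + t • (twistedCommutator K * ι K 2) := by
  simp [flow]

@[simp]
lemma flow_ι_two (t : K) : flow K t (ι K 2) = ι K 2 := by
  simp [flow]

@[simp]
lemma flow_twistedCommutator (t : K) : flow K t (twistedCommutator K) = twistedCommutator K := by
  show flow K t (ι K 0 * ι K 2 - ι K 2 * ι K 1) = ι K 0 * ι K 2 - ι K 2 * ι K 1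
  simp only [map_sub, map_mul, flow_ι_zero, flow_ι_one, flow_ι_two, add_mul, mul_add,
    smul_mul_assoc, mul_smul_comm, mul_assoc]
  abel

lemma flow_comp_flow (s t : K) : (flow K s).comp (flow K t) = flow K (s + t) := by
  refine hom_ext (funext fun i => ?_)
  fin_cases i <;> simp [add_smul] <;> abel

lemma flow_zero : flow K 0 = AlgHom.id K (FreeAlgebra K (Fin 3)) := by
  refine hom_ext (funext fun i => ?_)
  fin_cases i <;> simp

lemma flow_one :
    flow K 1 = lift K ![ι K 0 + ι K 2 * (ι K 0 * ι K 2 - ι K 2 * ι K 1),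
      ι K 1 + (ι K 0 * ι K 2 - ι K 2 * ι K 1) * ι K 2, ι K 2] := by
  simp [flow, twistedCommutator]

lemma flow_neg_one :
    flow K (-1) = lift K ![ι K 0 - ι K 2 * (ι K 0 * ι K 2 - ι K 2 * ι K 1),
      ι K 1 - (ι K 0 * ι K 2 - ι K 2 * ι K 1) * ι K 2, ι K 2] := by
  simp [flow, twistedCommutator, sub_eq_add_neg]

end Anick

/-- The endomorphism `φ` of the free associative algebra `K⟨x,y,z⟩` given by
`φ(x) = x + z(xz − zy)`, `φ(y) = y + (xz − zy)z`, `φ(z) = z` is a `K`-algebra automorphism,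
with inverse `ψ(x) = x − z(xz − zy)`, `ψ(y) = y − (xz − zy)z`, `ψ(z) = z`. -/
theorem anick_variant_is_automorphism (K : Type*) [Field K] :
    (FreeAlgebra.lift K
          ![ι K 0 + ι K 2 * (ι K 0 * ι K 2 - ι K 2 * ι K 1),
            ι K 1 + (ι K 0 * ι K 2 - ι K 2 * ι K 1) * ι K 2,
            (ι K 2 : FreeAlgebra K (Fin 3))]).comp
        (FreeAlgebra.lift K
          ![ι K 0 - ι K 2 * (ι K 0 * ι K 2 - ι K 2 * ι K 1),
            ι K 1 - (ι K 0 * ι K 2 - ι K 2 * ι K 1) * ι K 2,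
            (ι K 2 : FreeAlgebra K (Fin 3))]) = AlgHom.id K (FreeAlgebra K (Fin 3)) ∧
    (FreeAlgebra.lift K
          ![ι K 0 - ι K 2 * (ι K 0 * ι K 2 - ι K 2 * ι K 1),
            ι K 1 - (ι K 0 * ι K 2 - ι K 2 * ι K 1) * ι K 2,
            (ι K 2 : FreeAlgebra K (Fin 3))]).comp
        (FreeAlgebra.lift K
          ![ι K 0 + ι K 2 * (ι K 0 * ι K 2 - ι K 2 * ι K 1),
            ι K 1 + (ι K 0 * ι K 2 - ι K 2 * ι K 1) * ι K 2,
            (ι K 2 : FreeAlgebra K (Fin 3))]) = AlgHom.id K (FreeAlgebra K (Fin 3)) := by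
  rw [← Anick.flow_one, ← Anick.flow_neg_one, Anick.flow_comp_flow, Anick.flow_comp_flow,
    add_neg_cancel, neg_add_cancel, Anick.flow_zero]
  exact ⟨rfl, rfl⟩
end

section
/- The Nagata endomorphism of K[x,y,z] defined by x ↦ x − 2(y²+xz)y − (y²+xz)²z, y ↦ y + (y²+xz)z, z ↦ z is a K-algebra automorphism of K[x,y,z]. -/
/-!
The Nagata map is the time-one map of the flow `y ↦ y + tΔz`, `x ↦ x − 2tΔy − t²Δ²z`,
`z ↦ z`, where `Δ = y² + xz`. Each map of the flow fixes `Δ`, so composing the maps at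
times `s` and `t` simply adds the parameters; hence the map at time `-1` inverts the Nagata map.
-/

open MvPolynomial

namespace MvPolynomial

variable {R : Type*} [CommRing R]

noncomputable def nagataDelta : MvPolynomial (Fin 3) R :=
  X 1 ^ 2 + X 0 * X 2

noncomputable def nagataFlow (t : R) : MvPolynomial (Fin 3) R →ₐ[R] MvPolynomial (Fin 3) R :=
  aeval ![X 0 - 2 * C t * nagataDelta * X 1 - C t ^ 2 * nagataDelta ^ 2 * X 2,
    X 1 + C t * nagataDelta * X 2, X 2]

@[simp]
theorem nagataFlow_X_zero (t : R) :
    nagataFlow t (X 0) = X 0 - 2 * C t * nagataDelta * X 1 - C t ^ 2 * nagataDelta ^ 2 * X 2 := by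
  simp [nagataFlow]

@[simp]
theorem nagataFlow_X_one (t : R) : nagataFlow t (X 1) = X 1 + C t * nagataDelta * X 2 := by
  simp [nagataFlow]

@[simp]
theorem nagataFlow_X_two (t : R) : nagataFlow t (X 2) = X 2 := by
  simp [nagataFlow]

@[simp]
theorem nagataFlow_nagataDelta (t : R) : nagataFlow t nagataDelta = nagataDelta := by
  simp only [nagataDelta, map_add, map_mul, map_pow, nagataFlow_X_zero, nagataFlow_X_one,
    nagataFlow_X_two]
  ring

theorem nagataFlow_comp (s t : R) :
    (nagataFlow s).comp (nagataFlow t) = nagataFlow (s + t) := by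
  refine algHom_ext fun i => ?_
  fin_cases i <;> simp [map_ofNat] <;> ring

theorem nagataFlow_zero : nagataFlow (0 : R) = AlgHom.id R _ := by
  refine algHom_ext fun i => ?_
  fin_cases i <;> simp

noncomputable def nagataFlowEquiv (t : R) :
    MvPolynomial (Fin 3) R ≃ₐ[R] MvPolynomial (Fin 3) R :=
  AlgEquiv.ofAlgHom (nagataFlow t) (nagataFlow (-t))
    (by rw [nagataFlow_comp, add_neg_cancel, nagataFlow_zero])
    (by rw [nagataFlow_comp, neg_add_cancel, nagataFlow_zero])

end MvPolynomial

/-- The Nagata endomorphism of `K[x,y,z]`, `x ↦ x − 2(y²+xz)y − (y²+xz)²z`,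
`y ↦ y + (y²+xz)z`, `z ↦ z`, is a `K`-algebra automorphism. -/
theorem nagata_is_automorphism (K : Type*) [Field K] :
    ∃ e : MvPolynomial (Fin 3) K ≃ₐ[K] MvPolynomial (Fin 3) K,
      e (X 0) = X 0 - 2 * ((X 1) ^ 2 + X 0 * X 2) * X 1 - ((X 1) ^ 2 + X 0 * X 2) ^ 2 * X 2 ∧
      e (X 1) = X 1 + ((X 1) ^ 2 + X 0 * X 2) * X 2 ∧
      e (X 2) = X 2 := by
  refine ⟨nagataFlowEquiv 1, ?_, ?_, ?_⟩ <;> simp [nagataFlowEquiv, nagataDelta]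
end

section
/- For K-algebra endomorphisms φ, ψ of the free associative algebra F = K⟨y₀,…,y_n⟩, the Dicks–Lewin Jacobian matrices satisfy the chain rule J(φψ) = J(φ)·φ(J(ψ)), where φ acts entrywise on J(ψ) via the induced map on F^op ⊗ F. -/
open TensorProduct MulOpposite

/-- Dicks–Lewin partial derivative of a monomial given as a word. -/
noncomputable def wordDeriv (K : Type*) [Field K] (n : ℕ) (i : Fin (n + 1)) :
    List (Fin (n + 1)) →
      (FreeAlgebra K (Fin (n + 1)))ᵐᵒᵖ ⊗[K] FreeAlgebra K (Fin (n + 1))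
  | [] => 0
  | a :: w =>
      (if a = i then
          (1 : (FreeAlgebra K (Fin (n + 1)))ᵐᵒᵖ) ⊗ₜ[K] (w.map (FreeAlgebra.ι K)).prod
        else 0) +
        wordDeriv K n i w * (op (FreeAlgebra.ι K a) ⊗ₜ[K] 1)

/-- The Dicks–Lewin partial derivative `∂/∂y_i : F → F^op ⊗_K F`. -/
noncomputable def dicksLewinDeriv (K : Type*) [Field K] (n : ℕ) (i : Fin (n + 1)) :
    FreeAlgebra K (Fin (n + 1)) →ₗ[K]
      (FreeAlgebra K (Fin (n + 1)))ᵐᵒᵖ ⊗[K] FreeAlgebra K (Fin (n + 1)) :=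
  (FreeAlgebra.basisFreeMonoid K (Fin (n + 1))).constr K fun w =>
    wordDeriv K n i (FreeMonoid.toList w)

/-- The Dicks–Lewin Jacobian matrix of an endomorphism `φ` of `F = K⟨y₀,…,y_n⟩`:
its `(i,j)` entry is `∂φ(y_j)/∂y_i ∈ F^op ⊗_K F`. -/
noncomputable def dlJacobian (K : Type*) [Field K] (n : ℕ)
    (φ : FreeAlgebra K (Fin (n + 1)) →ₐ[K] FreeAlgebra K (Fin (n + 1))) :
    Matrix (Fin (n + 1)) (Fin (n + 1))
      ((FreeAlgebra K (Fin (n + 1)))ᵐᵒᵖ ⊗[K] FreeAlgebra K (Fin (n + 1))) :=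
  fun i j => dicksLewinDeriv K n i (φ (FreeAlgebra.ι K j))


section Aux
variable (K : Type*) [Field K] (n : ℕ)

private lemma symm_of_eq_prod (w : FreeMonoid (Fin (n+1))) :
    FreeAlgebra.equivMonoidAlgebraFreeMonoid.symm (MonoidAlgebra.of K (FreeMonoid (Fin (n+1))) w)
      = ((FreeMonoid.toList w).map (FreeAlgebra.ι K)).prod := by
  induction w using FreeMonoid.recOn with
  | one => rw [map_one, map_one]; rfl
  | of_mul a w ih =>
    rw [map_mul, map_mul, ih, FreeMonoid.toList_of_mul, List.map_cons, List.prod_cons]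
    congr 1
    have : MonoidAlgebra.of K (FreeMonoid (Fin (n+1))) (FreeMonoid.of a) =
        FreeAlgebra.equivMonoidAlgebraFreeMonoid (FreeAlgebra.ι K a) := by
      simp [FreeAlgebra.equivMonoidAlgebraFreeMonoid]
    rw [this, AlgEquiv.symm_apply_apply]

private lemma basis_apply (w : FreeMonoid (Fin (n+1))) :
    FreeAlgebra.basisFreeMonoid K (Fin (n+1)) w
      = ((FreeMonoid.toList w).map (FreeAlgebra.ι K)).prod := by
  rw [← symm_of_eq_prod]
  rfl

private lemma deriv_basis (i : Fin (n+1)) (w : FreeMonoid (Fin (n+1))) :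
    dicksLewinDeriv K n i (FreeAlgebra.basisFreeMonoid K (Fin (n+1)) w)
      = wordDeriv K n i (FreeMonoid.toList w) := by
  rw [dicksLewinDeriv, Module.Basis.constr_basis]

private lemma deriv_prod (i : Fin (n+1)) (l : List (Fin (n+1))) :
    dicksLewinDeriv K n i ((l.map (FreeAlgebra.ι K)).prod) = wordDeriv K n i l := by
  have := deriv_basis K n i (FreeMonoid.ofList l)
  rwa [basis_apply, FreeMonoid.toList_ofList] at this

private lemma dl_deriv_one (i : Fin (n+1)) : dicksLewinDeriv K n i 1 = 0 := by
  have := deriv_prod K n i []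
  simpa [wordDeriv] using this

private lemma deriv_algebraMap (i : Fin (n+1)) (r : K) :
    dicksLewinDeriv K n i (algebraMap K (FreeAlgebra K (Fin (n+1))) r) = 0 := by
  rw [Algebra.algebraMap_eq_smul_one, map_smul, dl_deriv_one, smul_zero]

private lemma deriv_ι (i j : Fin (n+1)) :
    dicksLewinDeriv K n i (FreeAlgebra.ι K j)
      = if j = i then (1 : (FreeAlgebra K (Fin (n+1)))ᵐᵒᵖ) ⊗ₜ[K] 1 else 0 := by
  have := deriv_prod K n i [j]
  simpa [wordDeriv, Algebra.TensorProduct.one_def] using this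

end Aux

section Aux2
variable (K : Type*) [Field K] (n : ℕ)

private lemma deriv_ι_mul (i a : Fin (n+1)) (g : FreeAlgebra K (Fin (n+1))) :
    dicksLewinDeriv K n i (FreeAlgebra.ι K a * g)
      = (if a = i then ((1 : (FreeAlgebra K (Fin (n+1)))ᵐᵒᵖ) ⊗ₜ[K] g) else 0)
        + dicksLewinDeriv K n i g * (op (FreeAlgebra.ι K a) ⊗ₜ[K] 1) := by
  have key : (dicksLewinDeriv K n i).comp (LinearMap.mulLeft K (FreeAlgebra.ι K a))
      = (if a = i then (TensorProduct.mk K (FreeAlgebra K (Fin (n+1)))ᵐᵒᵖ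
            (FreeAlgebra K (Fin (n+1))) 1) else 0)
        + (LinearMap.mulRight K
              (op (FreeAlgebra.ι K a) ⊗ₜ[K] (1 : FreeAlgebra K (Fin (n+1))))).comp
            (dicksLewinDeriv K n i) := by
    apply Module.Basis.ext (FreeAlgebra.basisFreeMonoid K (Fin (n+1)))
    intro w
    simp only [LinearMap.comp_apply, LinearMap.mulLeft_apply, LinearMap.add_apply,
      LinearMap.mulRight_apply]
    rw [basis_apply, ← List.prod_cons, ← List.map_cons, deriv_prod, deriv_prod]
    rw [wordDeriv]
    congr 1
    · split
      · rfl
      · simp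
  have h := LinearMap.congr_fun key g
  simp only [LinearMap.comp_apply, LinearMap.mulLeft_apply, LinearMap.add_apply,
    LinearMap.mulRight_apply] at h
  rw [h]
  congr 1
  split <;> simp

end Aux2

section Aux3
variable (K : Type*) [Field K] (n : ℕ)

private lemma dl_deriv_mul (i : Fin (n+1)) (f g : FreeAlgebra K (Fin (n+1))) :
    dicksLewinDeriv K n i (f * g)
      = dicksLewinDeriv K n i f * ((1 : (FreeAlgebra K (Fin (n+1)))ᵐᵒᵖ) ⊗ₜ[K] g)
        + dicksLewinDeriv K n i g * (op f ⊗ₜ[K] 1) := by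
  induction f using FreeAlgebra.induction generalizing g with
  | grade0 r =>
    rw [deriv_algebraMap, zero_mul, zero_add, ← Algebra.smul_def, map_smul]
    rw [Algebra.algebraMap_eq_smul_one, op_smul, op_one, ← TensorProduct.smul_tmul',
      mul_smul_comm, ← Algebra.TensorProduct.one_def, mul_one]
  | grade1 a =>
    rw [deriv_ι_mul, deriv_ι]
    congr 1
    split
    · rw [Algebra.TensorProduct.tmul_mul_tmul, one_mul, one_mul]
    · rw [zero_mul]
  | mul f₁ f₂ ih₁ ih₂ =>
    rw [mul_assoc, ih₁, ih₂]
    conv_rhs => rw [ih₁ f₂]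
    simp only [add_mul, mul_assoc, Algebra.TensorProduct.tmul_mul_tmul, one_mul, mul_one,
      ← MulOpposite.op_mul, add_assoc]
  | add f₁ f₂ ih₁ ih₂ =>
    rw [add_mul, map_add, ih₁, ih₂, map_add, add_mul, op_add, TensorProduct.add_tmul, mul_add]
    abel

end Aux3

section Aux4
variable (K : Type*) [Field K] (n : ℕ)

private lemma dl_chain (φ : FreeAlgebra K (Fin (n+1)) →ₐ[K] FreeAlgebra K (Fin (n+1)))
    (i : Fin (n+1)) (f : FreeAlgebra K (Fin (n+1))) :
    dicksLewinDeriv K n i (φ f)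
      = ∑ k : Fin (n+1), dicksLewinDeriv K n i (φ (FreeAlgebra.ι K k)) *
          (Algebra.TensorProduct.map (AlgHom.op φ) φ) (dicksLewinDeriv K n k f) := by
  induction f using FreeAlgebra.induction with
  | grade0 r => simp [AlgHom.commutes, deriv_algebraMap]
  | grade1 j =>
    simp [deriv_ι, ← Algebra.TensorProduct.one_def, apply_ite
      (Algebra.TensorProduct.map (AlgHom.op φ) φ), mul_ite, Finset.sum_ite_eq]
  | mul f g ihf ihg =>
    rw [map_mul, dl_deriv_mul, ihf, ihg, Finset.sum_mul, Finset.sum_mul,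
      ← Finset.sum_add_distrib]
    refine Finset.sum_congr rfl fun k _ => ?_
    rw [dl_deriv_mul]
    simp only [map_add, map_mul, Algebra.TensorProduct.map_tmul, map_one,
      AlgHom.op_apply_apply, unop_op, mul_add, mul_assoc]
  | add f g ihf ihg =>
    rw [map_add, map_add, ihf, ihg, ← Finset.sum_add_distrib]
    refine Finset.sum_congr rfl fun k _ => ?_
    rw [map_add, map_add, mul_add]

end Aux4

/-- Chain rule for the Dicks–Lewin Jacobian matrices: `J(φ∘ψ) = J(φ)·φ(J(ψ))`,
where `φ` acts entrywise on `J(ψ)` via the induced map `φ^op ⊗ φ` on `F^op ⊗_K F`. -/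
theorem dlJacobian_chainRule (K : Type*) [Field K] (n : ℕ)
    (φ ψ : FreeAlgebra K (Fin (n + 1)) →ₐ[K] FreeAlgebra K (Fin (n + 1))) :
    dlJacobian K n (φ.comp ψ) =
      dlJacobian K n φ *
        (dlJacobian K n ψ).map (Algebra.TensorProduct.map (AlgHom.op φ) φ) := by
  ext i j
  rw [Matrix.mul_apply]
  simp only [dlJacobian, Matrix.map_apply, AlgHom.comp_apply]
  exact dl_chain K n φ i (ψ (FreeAlgebra.ι K j))
end

section
/- The map sending a linear K[z]-automorphism of K⟨x₁,…,x_n,z⟩ to its Jacobian matrix is a group isomorphism from the group of linear K[z]-automorphisms onto GLₙ(K[z₁,z₂]). -/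
open FreeAlgebra

/-- `sandwich n p w` : for `p = Σ c_{ab} z₁^a z₂^b ∈ K[z₁,z₂]` and
`w ∈ F = K⟨x₁,…,x_n,z⟩` (with `z = ι (Fin.last n)`), the element `Σ c_{ab} z^a · w · z^b`. -/
noncomputable def sandwich (K : Type*) [Field K] (n : ℕ) (p : MvPolynomial (Fin 2) K)
    (w : FreeAlgebra K (Fin (n + 1))) : FreeAlgebra K (Fin (n + 1)) :=
  (AddMonoidAlgebra.coeff p).sum fun m c => c • (ι K (Fin.last n) ^ m 0 * w * ι K (Fin.last n) ^ m 1)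

/-- The linear `K[z]`-endomorphism of `K⟨x₁,…,x_n,z⟩` with Jacobian matrix `A`:
it fixes `z = ι (Fin.last n)` and sends `x_j = ι j.castSucc` to
`Σ_i sandwich (A i j) x_i`. -/
noncomputable def linearKzEndo (K : Type*) [Field K] (n : ℕ)
    (A : Matrix (Fin n) (Fin n) (MvPolynomial (Fin 2) K)) :
    FreeAlgebra K (Fin (n + 1)) →ₐ[K] FreeAlgebra K (Fin (n + 1)) :=
  FreeAlgebra.lift K fun j =>
    Fin.lastCases (ι K (Fin.last n))
      (fun j' => ∑ i : Fin n, sandwich K n (A i j') (ι K i.castSucc)) j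

/-!
Composition of linear `K[z]`-endomorphisms corresponds to multiplication of their matrices because
`sandwich` is an action of `K[z₁, z₂]` on `F` (`sandwich_mul`). Matrices are read off through the
representation `F → M_{n+1}(K[z₁, z₂])` sending `z` to `diag(z₁, z₂, …, z₂)` and `xᵢ` to the matrix
unit `E₀,ᵢ₊₁`: the `(0, k+1)` entry of the image of `Σᵢ sandwich pᵢ xᵢ` is `p_k`. This read-off
makes sense for every endomorphism fixing `z`, in particular for the inverse of an automorphism `e`
with matrix `A`, where it turns `e⁻¹ ∘ e = id` into `jacobian e⁻¹ * A = 1`; so `A` is invertible.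
-/

open MvPolynomial

section

variable {K : Type*} [Field K] {n : ℕ}

local notation "R" => MvPolynomial (Fin 2) K
local notation "F" => FreeAlgebra K (Fin (n + 1))
local notation "𝐳" => ι K (Fin.last n)

theorem sandwich_eq_linearCombination (p : R) (w : F) :
    sandwich K n p w = Finsupp.linearCombination K (fun m : Fin 2 →₀ ℕ => 𝐳 ^ m 0 * w * 𝐳 ^ m 1)
      (AddMonoidAlgebra.coeffLinearEquiv K p) :=
  rfl

theorem sandwich_add (p q : R) (w : F) :
    sandwich K n (p + q) w = sandwich K n p w + sandwich K n q w := by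
  simp only [sandwich_eq_linearCombination, map_add]

theorem sandwich_sum_left {ι : Type*} (s : Finset ι) (p : ι → R) (w : F) :
    sandwich K n (∑ i ∈ s, p i) w = ∑ i ∈ s, sandwich K n (p i) w := by
  simp only [sandwich_eq_linearCombination, map_sum]

theorem sandwich_zero (w : F) : sandwich K n 0 w = 0 := by
  simp only [sandwich_eq_linearCombination, map_zero]

theorem sandwich_monomial (m : Fin 2 →₀ ℕ) (c : K) (w : F) :
    sandwich K n (monomial m c) w = c • (𝐳 ^ m 0 * w * 𝐳 ^ m 1) := by
  rw [sandwich_eq_linearCombination, AddMonoidAlgebra.coeffLinearEquiv_apply,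
    ← single_eq_monomial, AddMonoidAlgebra.coeff_single, Finsupp.linearCombination_single]

theorem sandwich_one (w : F) : sandwich K n 1 w = w := by
  simp [← C_1, ← monomial_zero', sandwich_monomial]

theorem sandwich_sum_right {ι : Type*} (s : Finset ι) (p : R) (w : ι → F) :
    sandwich K n p (∑ i ∈ s, w i) = ∑ i ∈ s, sandwich K n p (w i) := by
  simp only [sandwich_eq_linearCombination, Finset.mul_sum, Finset.sum_mul,
    Finsupp.linearCombination_apply, Finsupp.sum, Finset.smul_sum]
  exact Finset.sum_comm

theorem sandwich_mul (p q : R) (w : F) :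
    sandwich K n (p * q) w = sandwich K n p (sandwich K n q w) := by
  induction p using MvPolynomial.induction_on' with
  | add p p' hp hp' => rw [add_mul, sandwich_add, hp, hp', sandwich_add]
  | monomial m c =>
    rw [sandwich_monomial]
    induction q using MvPolynomial.induction_on' with
    | add q q' hq hq' =>
      rw [mul_add, sandwich_add, hq, hq', sandwich_add, mul_add, add_mul, smul_add]
    | monomial m' c' =>
      rw [monomial_mul, sandwich_monomial, sandwich_monomial, mul_smul_comm, smul_mul_assoc,
        smul_smul, Finsupp.add_apply, Finsupp.add_apply, pow_add, add_comm (m 1), pow_add]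
      noncomm_ring

theorem map_sandwich (φ : F →ₐ[K] F) (hφ : φ 𝐳 = 𝐳) (p : R) (w : F) :
    φ (sandwich K n p w) = sandwich K n p (φ w) := by
  simp [sandwich, map_finsuppSum, hφ]

@[simp]
theorem linearKzEndo_apply_last (A : Matrix (Fin n) (Fin n) R) : linearKzEndo K n A 𝐳 = 𝐳 := by
  simp [linearKzEndo]

@[simp]
theorem linearKzEndo_apply_castSucc (A : Matrix (Fin n) (Fin n) R) (j : Fin n) :
    linearKzEndo K n A (ι K j.castSucc) = ∑ i, sandwich K n (A i j) (ι K i.castSucc) := by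
  simp [linearKzEndo]

theorem linearKzEndo_one : linearKzEndo K n 1 = AlgHom.id K F := by
  refine FreeAlgebra.hom_ext (funext fun j => Fin.lastCases ?_ (fun j => ?_) j)
  · simp
  · rw [Function.comp_apply, linearKzEndo_apply_castSucc, Finset.sum_eq_single j]
    · simp [sandwich_one]
    · intro i _ hij
      rw [Matrix.one_apply_ne hij, sandwich_zero]
    · simp

theorem linearKzEndo_comp (A B : Matrix (Fin n) (Fin n) R) :
    (linearKzEndo K n A).comp (linearKzEndo K n B) = linearKzEndo K n (A * B) := by
  refine FreeAlgebra.hom_ext (funext fun j => Fin.lastCases ?_ (fun j => ?_) j)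
  · simp
  · simp only [Function.comp_apply, AlgHom.comp_apply, linearKzEndo_apply_castSucc, map_sum,
      map_sandwich _ (linearKzEndo_apply_last A), sandwich_sum_right, ← sandwich_mul,
      Matrix.mul_apply, sandwich_sum_left]
    rw [Finset.sum_comm]
    simp only [mul_comm]

noncomputable def jacobianRep : F →ₐ[K] Matrix (Fin (n + 1)) (Fin (n + 1)) R :=
  FreeAlgebra.lift K <| Fin.lastCases (Matrix.diagonal (Fin.cons (X 0) fun _ => X 1))
    fun i => Matrix.single 0 i.succ 1

@[simp]
theorem jacobianRep_apply_last :
    jacobianRep 𝐳 = Matrix.diagonal (Fin.cons (X 0) fun _ => X 1 : Fin (n + 1) → R) := by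
  simp [jacobianRep]

@[simp]
theorem jacobianRep_apply_castSucc (i : Fin n) :
    jacobianRep (ι K i.castSucc) = (Matrix.single 0 i.succ 1 : Matrix (Fin (n + 1)) _ R) := by
  simp [jacobianRep]

theorem jacobianRep_sandwich_apply (p : R) (w : F) (k : Fin n) :
    jacobianRep (sandwich K n p w) 0 k.succ = p * jacobianRep w 0 k.succ := by
  induction p using MvPolynomial.induction_on' with
  | add p q hp hq => rw [sandwich_add, map_add, Matrix.add_apply, hp, hq, add_mul]
  | monomial m c =>
    rw [sandwich_monomial, map_smul, map_mul, map_mul, map_pow, map_pow, jacobianRep_apply_last]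
    simp [Matrix.diagonal_pow, Matrix.mul_diagonal, Matrix.diagonal_mul,
      monomial_eq, Finsupp.prod_fintype, Fin.prod_univ_two, smul_eq_C_mul]
    ring

/-- For `φ` fixing `z` this is the matrix of the part of `φ` linear in the `xᵢ`: products of two
matrix units `E₀,ᵢ₊₁` vanish and polynomials in `z` are diagonal. -/
noncomputable def jacobian (φ : F →ₐ[K] F) : Matrix (Fin n) (Fin n) R :=
  Matrix.of fun k j => jacobianRep (φ (ι K j.castSucc)) 0 k.succ

theorem jacobian_id : jacobian (AlgHom.id K F) = 1 := by
  refine Matrix.ext fun k j => ?_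
  simp [jacobian, Matrix.single_apply, Matrix.one_apply, eq_comm]

theorem jacobian_comp_linearKzEndo (φ : F →ₐ[K] F) (hφ : φ 𝐳 = 𝐳) (A : Matrix (Fin n) (Fin n) R) :
    jacobian (φ.comp (linearKzEndo K n A)) = jacobian φ * A := by
  refine Matrix.ext fun k j => ?_
  simp [jacobian, map_sandwich φ hφ, Matrix.sum_apply, jacobianRep_sandwich_apply,
    Matrix.mul_apply, mul_comm]

theorem jacobian_linearKzEndo (A : Matrix (Fin n) (Fin n) R) :
    jacobian (linearKzEndo K n A) = A := by
  simpa [jacobian_id] using jacobian_comp_linearKzEndo (AlgHom.id K F) rfl A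

theorem linearKzEndo_injective : Function.Injective (linearKzEndo K n) :=
  Function.LeftInverse.injective jacobian_linearKzEndo

theorem isUnit_of_algEquiv_eq_linearKzEndo (e : F ≃ₐ[K] F) (A : Matrix (Fin n) (Fin n) R)
    (hA : (e : F →ₐ[K] F) = linearKzEndo K n A) : IsUnit A := by
  have he : e 𝐳 = 𝐳 := by rw [← AlgEquiv.coe_toAlgHom, hA, linearKzEndo_apply_last]
  have he_symm : (e.symm : F →ₐ[K] F) 𝐳 = 𝐳 := e.symm_apply_eq.mpr he.symm
  refine IsUnit.of_mul_eq_one_right (jacobian (e.symm : F →ₐ[K] F)) ?_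
  rw [← jacobian_comp_linearKzEndo _ he_symm, ← hA, AlgEquiv.symm_comp, jacobian_id]

noncomputable def linearKzEndoHom : Matrix (Fin n) (Fin n) R →* (F →ₐ[K] F) where
  toFun := linearKzEndo K n
  map_one' := linearKzEndo_one
  map_mul' A B := (linearKzEndo_comp A B).symm

noncomputable def linearKzAut : Matrix.GeneralLinearGroup (Fin n) R →* (F ≃ₐ[K] F) :=
  (AlgEquiv.algHomUnitsEquiv K F).toMonoidHom.comp (Units.map linearKzEndoHom)

theorem coe_linearKzAut (g : Matrix.GeneralLinearGroup (Fin n) R) :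
    (linearKzAut g : F →ₐ[K] F) = linearKzEndo K n g :=
  rfl

theorem linearKzAut_injective : Function.Injective (linearKzAut (K := K) (n := n)) :=
  fun g h hgh => Units.ext <| linearKzEndo_injective <| by
    rw [← coe_linearKzAut, ← coe_linearKzAut, hgh]

end

/-- The map sending a linear `K[z]`-automorphism of `K⟨x₁,…,x_n,z⟩` to its Jacobian matrix
is a group isomorphism from the group `G` of linear `K[z]`-automorphisms onto
`GLₙ(K[z₁,z₂])`. -/
theorem linearKzAut_iso_GL (K : Type*) [Field K] (n : ℕ) :
    ∃ (G : Subgroup (FreeAlgebra K (Fin (n + 1)) ≃ₐ[K] FreeAlgebra K (Fin (n + 1))))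
      (Φ : G ≃* Matrix.GeneralLinearGroup (Fin n) (MvPolynomial (Fin 2) K)),
      (∀ e : FreeAlgebra K (Fin (n + 1)) ≃ₐ[K] FreeAlgebra K (Fin (n + 1)),
        e ∈ G ↔ ∃ A : Matrix (Fin n) (Fin n) (MvPolynomial (Fin 2) K),
          (e : FreeAlgebra K (Fin (n + 1)) →ₐ[K] FreeAlgebra K (Fin (n + 1))) =
            linearKzEndo K n A) ∧
      ∀ (e : G) (A : Matrix (Fin n) (Fin n) (MvPolynomial (Fin 2) K)),
        ((e : FreeAlgebra K (Fin (n + 1)) ≃ₐ[K] FreeAlgebra K (Fin (n + 1))) :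
            FreeAlgebra K (Fin (n + 1)) →ₐ[K] FreeAlgebra K (Fin (n + 1))) =
          linearKzEndo K n A →
        (Φ e : Matrix (Fin n) (Fin n) (MvPolynomial (Fin 2) K)) = A := by
  refine ⟨linearKzAut.range, (MonoidHom.ofInjective linearKzAut_injective).symm,
    fun e => ⟨?_, ?_⟩, fun e A hA => ?_⟩
  · rintro ⟨g, rfl⟩
    exact ⟨g, coe_linearKzAut g⟩
  · rintro ⟨A, hA⟩
    obtain ⟨g, rfl⟩ := isUnit_of_algEquiv_eq_linearKzEndo e A hA
    exact ⟨g, AlgEquiv.coe_toAlgHom_injective ((coe_linearKzAut g).trans hA.symm)⟩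
  · have hΦe : linearKzAut ((MonoidHom.ofInjective linearKzAut_injective).symm e) = e :=
      congrArg Subtype.val ((MonoidHom.ofInjective linearKzAut_injective).apply_symm_apply e)
    apply linearKzEndo_injective
    rw [← coe_linearKzAut, hΦe, hA]
end
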